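/- Let g = m ⋉ n be a nilpotent real Lie algebra, where m has 1-dimensional center Z(m) and generic flat coadjoint orbits. Fix a Jordan–Hölder series of g passing through n at index k = dim n, with jump sets J(·) on g, on n (truncated series) and on m (projected series), and e(g), e(n), e(m) the corresponding ≺-minima. Assume X ⊆ n* is a subset such that: (a) X is Ad*-invariant in n* and J(ξ) = e(n) for every ξ ∈ X; (b) there are a Lie subalgebra s ⊆ n and a linear subspace V ⊆ n with n = s ⊕ V, [m, s] = {0}, [m, n] ⊆ V, and for every ξ ∈ X there exists η in the coadjoint orbit of ξ in n* with V ⊆ ker η and n(η) = s. Let X̃ ⊆ g* be any Ad*-invariant subset such that J(ξ̃) = e(g) and ξ̃|_n ∈ X for every ξ̃ ∈ X̃. Then for every ξ̃ ∈ X̃ and every hyperplane V_0 ⊂ m with Z(m) + V_0 = m, there exists ξ̃_0 in the coadjoint orbit of ξ̃ in g* such that V_0 + V ⊆ ker ξ̃_0, m(ξ̃_0|m) = Z(m), n(ξ̃_0|n) = s, and g(ξ̃_0) = Z(m) ⊕ s. -/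

import Mathlib

/-!
The jump set of a functional determines the dimension of its isotropy, so a functional with
`≺`-minimal jump set has inclusion-minimal isotropy. If `η` vanishes on `V` and `n(η|n) = s`, then
`g(η) = m(η|m) ⊕ s`; replacing `η|m` by a generic functional of `m` therefore forces
`m(η|m) = Z(m)` for every such `η` in `X̃`. Hypothesis (b) provides such an `η` in the orbit of
`ξ̃`, and one then sweeps along the flag `Z(m) + (m ∩ g_j)` of `m`: at each step some
`exp(-ad x)`, `x ∈ m`, makes `η` vanish on one more layer of `V₀`. Such an `x` exists because the
form `η([·,·])` on `m` has kernel `Z(m)`, and `η|n` is unchanged because `[m, n] ⊆ V ⊆ ker η`.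
-/

open Module

/-- The isotropy subalgebra `g(ξ) = {x ∈ g : ξ([x,y]) = 0 for all y ∈ g}`. -/
noncomputable def isotropy {g : Type*} [LieRing g] [LieAlgebra ℝ g]
    (ξ : Module.Dual ℝ g) : Submodule ℝ g where
  carrier := {x | ∀ y : g, ξ ⁅x, y⁆ = 0}
  add_mem' := by
    intro a b ha hb y
    simp [add_lie, ha y, hb y]
  zero_mem' := by intro y; simp
  smul_mem' := by
    intro c a ha y
    simp [smul_lie, ha y]

/-- The relative isotropy `W(ξ|W) = {x ∈ W : ξ([x,y]) = 0 for all y ∈ W}`. -/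
noncomputable def isotropyOn {g : Type*} [LieRing g] [LieAlgebra ℝ g]
    (W : Submodule ℝ g) (ξ : Module.Dual ℝ g) : Submodule ℝ g where
  carrier := {x | x ∈ W ∧ ∀ y ∈ W, ξ ⁅x, y⁆ = 0}
  add_mem' := by
    intro a b ha hb
    exact ⟨W.add_mem ha.1 hb.1, fun y hy => by simp [add_lie, ha.2 y hy, hb.2 y hy]⟩
  zero_mem' := ⟨W.zero_mem, fun y hy => by simp⟩
  smul_mem' := by
    intro c a ha
    exact ⟨W.smul_mem c ha.1, fun y hy => by simp [smul_lie, ha.2 y hy]⟩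

/-- The center `Z(W) = {x ∈ W : [x,y] = 0 for all y ∈ W}` of a subalgebra `W`. -/
noncomputable def centerIn {g : Type*} [LieRing g] [LieAlgebra ℝ g]
    (W : Submodule ℝ g) : Submodule ℝ g where
  carrier := {x | x ∈ W ∧ ∀ y ∈ W, ⁅x, y⁆ = 0}
  add_mem' := by
    intro a b ha hb
    exact ⟨W.add_mem ha.1 hb.1, fun y hy => by simp [add_lie, ha.2 y hy, hb.2 y hy]⟩
  zero_mem' := ⟨W.zero_mem, fun y hy => by simp⟩
  smul_mem' := by
    intro c a ha
    exact ⟨W.smul_mem c ha.1, fun y hy => by simp [smul_lie, ha.2 y hy]⟩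

/-- The jump set of the series `gs`, truncated at index `b`, relative to an
"isotropy" subspace `I`: the set of `j ∈ {1,…,b}` with `gs j ⊄ gs (j-1) + I`. -/
def jumpSetGen {g : Type*} [LieRing g] [LieAlgebra ℝ g]
    (gs : ℕ → Submodule ℝ g) (b : ℕ) (I : Submodule ℝ g) : Set ℕ :=
  {j | 1 ≤ j ∧ j ≤ b ∧ ¬ gs j ≤ gs (j - 1) ⊔ I}

/-- The minimum of a set of naturals, as an element of `ℕ∞`, with `min ∅ = ∞`. -/
noncomputable def eMin (s : Set ℕ) : ℕ∞ := sInf ((↑) '' s)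

/-- The order `e1 ≺ e2 ⟺ min(e1 \ e2) < min(e2 \ e1)`, where `min ∅ = ∞`. -/
def precRel (e1 e2 : Set ℕ) : Prop := eMin (e1 \ e2) < eMin (e2 \ e1)

/-- `exp (ad x)`, as a finite sum; since `ad x` is a nilpotent endomorphism of
index at most `finrank ℝ g`, this finite sum equals the exponential series. -/
noncomputable def expAd {g : Type*} [LieRing g] [LieAlgebra ℝ g] (x : g) : g →ₗ[ℝ] g :=
  ∑ k ∈ Finset.range (Module.finrank ℝ g + 1),
    ((k.factorial : ℝ)⁻¹) • ((LieAlgebra.ad ℝ g x : Module.End ℝ g) ^ k)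

/-- `η` lies in the coadjoint orbit of `ξ`, i.e. `η = ξ ∘ exp(-ad x₁) ∘ ⋯ ∘ exp(-ad xᵣ)`
for some `x₁, …, xᵣ`. -/
noncomputable def coOrbit {g : Type*} [LieRing g] [LieAlgebra ℝ g]
    (ξ η : Module.Dual ℝ g) : Prop :=
  ∃ l : List g, η = l.foldl (fun ζ x => ζ.comp (expAd (-x))) ξ

/-- `η` represents an element of the coadjoint orbit of `ξ|_W` in `W*`, for a
Lie subalgebra `W`: its restriction to `W` is obtained from that of `ξ` by
composing with products of `exp(-ad y)`, `y ∈ W` (note that each such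
`exp(-ad y)` leaves `W` invariant when `W` is a subalgebra resp. an ideal). -/
noncomputable def coOrbitOn {g : Type*} [LieRing g] [LieAlgebra ℝ g]
    (W : Submodule ℝ g) (ξ η : Module.Dual ℝ g) : Prop :=
  ∃ l : List g, (∀ y ∈ l, y ∈ W) ∧
    ∀ z ∈ W, η z = (l.foldl (fun ζ x => ζ.comp (expAd (-x))) ξ) z

section Flag

variable {K E : Type*} [DivisionRing K] [AddCommGroup E] [Module K E] [FiniteDimensional K E]

open Classical in
lemma finrank_sup_eq_finrank_add_card_jumps (gs : ℕ → Submodule K E) (I : Submodule K E)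
    (t : ℕ) (hchain : ∀ j < t, gs j ≤ gs (j + 1)) (hdim : ∀ j ≤ t, finrank K (gs j) = j) :
    finrank K ↥(gs t ⊔ I) =
      finrank K I + ((Finset.Icc 1 t).filter fun j => ¬ gs j ≤ gs (j - 1) ⊔ I).card := by
  induction t with
  | zero => rw [Submodule.finrank_eq_zero.mp (hdim 0 le_rfl), bot_sup_eq]; simp
  | succ t ih =>
    have ih := ih (fun j hj => hchain j (by omega)) (fun j hj => hdim j (by omega))
    have hle : gs t ≤ gs (t + 1) := hchain t (by omega)
    rw [← Finset.insert_Icc_right_eq_Icc_add_one (by omega), Finset.filter_insert,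
      Nat.add_sub_cancel]
    by_cases hjump : gs (t + 1) ≤ gs t ⊔ I
    · have heq : gs (t + 1) ⊔ I = gs t ⊔ I :=
        le_antisymm (sup_le hjump le_sup_right) (sup_le_sup_right hle I)
      rw [if_neg (not_not.mpr hjump), heq, ih]
    · have hlt : gs t ⊔ I < gs (t + 1) ⊔ I :=
        lt_of_le_of_ne (sup_le_sup_right hle I) fun h => hjump (h ▸ le_sup_left)
      have hsup : gs (t + 1) ⊔ (gs t ⊔ I) = gs (t + 1) ⊔ I := by
        rw [← sup_assoc, sup_eq_left.mpr hle]
      have h1 := Submodule.finrank_lt_finrank_of_lt hlt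
      have h2 := Submodule.finrank_sup_add_finrank_inf_eq (gs (t + 1)) (gs t ⊔ I)
      have h3 := Submodule.finrank_mono (le_inf hle le_sup_left : gs t ≤ gs (t + 1) ⊓ (gs t ⊔ I))
      rw [hsup, hdim (t + 1) le_rfl] at h2
      rw [hdim t (by omega)] at h3
      rw [if_pos hjump, Finset.card_insert_of_notMem (by simp)]
      omega

open Classical in
lemma finrank_add_card_jumps {gs : ℕ → Submodule K E} {d : ℕ} (hd : finrank K E = d)
    (hgsd : gs d = ⊤) (hchain : ∀ j < d, gs j ≤ gs (j + 1))
    (hdim : ∀ j ≤ d, finrank K (gs j) = j) (I : Submodule K E) :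
    finrank K I + ((Finset.Icc 1 d).filter fun j => ¬ gs j ≤ gs (j - 1) ⊔ I).card = d := by
  have h := finrank_sup_eq_finrank_add_card_jumps gs I d hchain hdim
  rwa [hgsd, top_sup_eq, finrank_top, hd, eq_comm] at h

end Flag

section JumpSet

variable {g : Type*} [LieRing g] [LieAlgebra ℝ g]

lemma jumpSetGen_anti {gs : ℕ → Submodule ℝ g} {b : ℕ} {I I' : Submodule ℝ g} (h : I ≤ I') :
    jumpSetGen gs b I' ⊆ jumpSetGen gs b I :=
  fun _ ⟨h1, h2, h3⟩ => ⟨h1, h2, fun hle => h3 (hle.trans (sup_le_sup_left h _))⟩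

lemma jumpSetGen_ne_of_lt [FiniteDimensional ℝ g] {gs : ℕ → Submodule ℝ g} {d : ℕ}
    (hd : finrank ℝ g = d) (hgsd : gs d = ⊤) (hchain : ∀ j < d, gs j ≤ gs (j + 1))
    (hdim : ∀ j ≤ d, finrank ℝ (gs j) = j) {I I' : Submodule ℝ g} (h : I < I') :
    jumpSetGen gs d I ≠ jumpSetGen gs d I' := by
  classical
  intro heq
  have hjumps : ((Finset.Icc 1 d).filter fun j => ¬ gs j ≤ gs (j - 1) ⊔ I) =
      (Finset.Icc 1 d).filter fun j => ¬ gs j ≤ gs (j - 1) ⊔ I' := by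
    refine Finset.filter_congr fun j hj => ?_
    rw [Finset.mem_Icc] at hj
    simpa [jumpSetGen, hj.1, hj.2] using Set.ext_iff.mp heq j
  have hI := finrank_add_card_jumps hd hgsd hchain hdim I
  have hI' := finrank_add_card_jumps hd hgsd hchain hdim I'
  rw [hjumps] at hI
  have := Submodule.finrank_lt_finrank_of_lt h
  omega

lemma not_precRel_of_subset {e e' : Set ℕ} (h : e ⊆ e') : ¬ precRel e e' := by
  simp [precRel, eMin, Set.sdiff_eq_empty.mpr h]

lemma not_isotropy_lt_of_jumpSetGen_minimal [FiniteDimensional ℝ g] {gs : ℕ → Submodule ℝ g}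
    {d : ℕ} (hd : finrank ℝ g = d) (hgsd : gs d = ⊤) (hchain : ∀ j < d, gs j ≤ gs (j + 1))
    (hdim : ∀ j ≤ d, finrank ℝ (gs j) = j) {ξ ζ : Dual ℝ g}
    (hmin : jumpSetGen gs d (isotropy ξ) = jumpSetGen gs d (isotropy ζ) ∨
      precRel (jumpSetGen gs d (isotropy ξ)) (jumpSetGen gs d (isotropy ζ))) :
    ¬ isotropy ζ < isotropy ξ := fun hlt =>
  hmin.elim (jumpSetGen_ne_of_lt hd hgsd hchain hdim hlt).symm
    (not_precRel_of_subset (jumpSetGen_anti hlt.le))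

end JumpSet

lemma Subspace.exists_dual_eq_zero_and_eqOn {K V : Type*} [Field K] [AddCommGroup V] [Module K V]
    (A B : Submodule K V) (η : Dual K V) (h : ∀ w ∈ A ⊓ B, η w = 0) :
    ∃ φ : Dual K V, (∀ a ∈ A, φ a = 0) ∧ ∀ b ∈ B, φ b = η b := by
  have hη : η ∈ (A ⊓ B).dualAnnihilator := (Submodule.mem_dualAnnihilator η).mpr h
  rw [Subspace.dualAnnihilator_inf_eq] at hη
  obtain ⟨φ, hφ, ψ, hψ, rfl⟩ := Submodule.mem_sup.mp hη
  refine ⟨φ, (Submodule.mem_dualAnnihilator φ).mp hφ, fun b hb => ?_⟩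
  simp [(Submodule.mem_dualAnnihilator ψ).mp hψ b hb]

section Isotropy

variable {g : Type*} [LieRing g] [LieAlgebra ℝ g]

lemma mem_isotropy {ξ : Dual ℝ g} {x : g} : x ∈ isotropy ξ ↔ ∀ y, ξ ⁅x, y⁆ = 0 := Iff.rfl

lemma mem_isotropyOn {W : Submodule ℝ g} {ξ : Dual ℝ g} {x : g} :
    x ∈ isotropyOn W ξ ↔ x ∈ W ∧ ∀ y ∈ W, ξ ⁅x, y⁆ = 0 := Iff.rfl

lemma centerIn_le (W : Submodule ℝ g) : centerIn W ≤ W := fun _ hx => hx.1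

lemma isotropyOn_le (W : Submodule ℝ g) (ξ : Dual ℝ g) : isotropyOn W ξ ≤ W := fun _ hx => hx.1

lemma centerIn_le_isotropyOn (W : Submodule ℝ g) (ξ : Dual ℝ g) : centerIn W ≤ isotropyOn W ξ :=
  fun _ hx => ⟨hx.1, fun y hy => by rw [hx.2 y hy, map_zero]⟩

lemma isotropyOn_congr {W : Submodule ℝ g} (hW : ∀ x ∈ W, ∀ y ∈ W, ⁅x, y⁆ ∈ W)
    {ξ η : Dual ℝ g} (h : ∀ z ∈ W, ξ z = η z) : isotropyOn W ξ = isotropyOn W η := by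
  ext x
  simp only [mem_isotropyOn, and_congr_right_iff]
  exact fun hx => forall₂_congr fun y hy => by rw [h _ (hW x hx y hy)]

/-- The form `(x, y) ↦ η ⁅x, y⁆` on `W` is alternating, so its range is the annihilator of
its kernel `W(η|W)`. -/
lemma exists_lie_eq_of_isotropyOn [FiniteDimensional ℝ g] (W : Submodule ℝ g) (η φ : Dual ℝ g)
    (hφ : ∀ y ∈ isotropyOn W η, φ y = 0) : ∃ x ∈ W, ∀ y ∈ W, η ⁅x, y⁆ = φ y := by
  let b : W →ₗ[ℝ] Dual ℝ W := LinearMap.mk₂ ℝ (fun x y => η ⁅(x : g), (y : g)⁆)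
    (by intros; simp [add_lie]) (by intros; simp [smul_lie])
    (by intros; simp [lie_add]) (by intros; simp [lie_smul])
  have hker : φ ∘ₗ W.subtype ∈ (LinearMap.ker b).dualAnnihilator := by
    refine (Submodule.mem_dualAnnihilator _).mpr fun x hx => hφ x ⟨x.2, fun y hy => ?_⟩
    simpa [b] using LinearMap.congr_fun (LinearMap.mem_ker.mp hx) ⟨y, hy⟩
  rw [← LinearMap.range_dualMap_eq_dualAnnihilator_ker] at hker
  obtain ⟨F, hF⟩ := hker
  refine ⟨-((evalEquiv ℝ W).symm F : g), neg_mem (Subtype.prop _), fun y hy => ?_⟩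
  have := LinearMap.congr_fun hF ⟨y, hy⟩
  simp only [LinearMap.dualMap_apply, LinearMap.comp_apply, Submodule.subtype_apply] at this
  rw [← this, ← apply_evalEquiv_symm_apply ℝ W (b ⟨y, hy⟩) F, neg_lie, ← lie_skew, neg_neg]
  rfl

end Isotropy

section ExpAd

variable {g : Type*} [LieRing g] [LieAlgebra ℝ g]

lemma expAd_apply (x w : g) :
    expAd x w = ∑ k ∈ Finset.range (finrank ℝ g + 1),
      ((k.factorial : ℝ)⁻¹) • ((LieAlgebra.ad ℝ g x ^ k) w) := by
  simp [expAd, LinearMap.sum_apply]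

lemma ad_pow_succ_apply_mem {W : Submodule ℝ g} {y w : g} (hW : ∀ u ∈ W, ⁅y, u⁆ ∈ W)
    (hw : ⁅y, w⁆ ∈ W) (k : ℕ) : (LieAlgebra.ad ℝ g y ^ (k + 1)) w ∈ W := by
  rw [pow_succ, Module.End.mul_apply]
  exact Module.End.pow_apply_mem_of_forall_mem k hW _ hw

lemma expAd_apply_sub_mem {W : Submodule ℝ g} {y w : g} (hW : ∀ u ∈ W, ⁅y, u⁆ ∈ W)
    (hw : ⁅y, w⁆ ∈ W) : expAd y w - w ∈ W := by
  rw [expAd_apply, Finset.sum_range_succ']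
  simp only [pow_zero, Nat.factorial_zero, Nat.cast_one, inv_one, one_smul,
    Module.End.one_apply, add_sub_cancel_right]
  exact Submodule.sum_mem _ fun k _ => Submodule.smul_mem _ _ (ad_pow_succ_apply_mem hW hw k)

lemma expAd_apply_sub_sub_lie_mem [FiniteDimensional ℝ g] {W : Submodule ℝ g}
    {y w : g} (hW : ∀ u ∈ W, ⁅y, u⁆ ∈ W) (hw : ⁅y, ⁅y, w⁆⁆ ∈ W) :
    expAd y w - w - ⁅y, w⁆ ∈ W := by
  obtain h0 | hD := Nat.eq_zero_or_eq_succ_pred (finrank ℝ g)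
  · have : Subsingleton g := finrank_zero_iff.mp h0
    simp [Subsingleton.elim (expAd y w - w - ⁅y, w⁆) 0]
  rw [expAd_apply, hD, Finset.sum_range_succ', Finset.sum_range_succ']
  simp only [zero_add, pow_zero, pow_one, Nat.factorial_zero, Nat.factorial_one, Nat.cast_one,
    inv_one, one_smul, Module.End.one_apply, LieAlgebra.ad_apply, add_sub_cancel_right]
  refine Submodule.sum_mem _ fun k _ => Submodule.smul_mem _ _ ?_
  rw [pow_succ, Module.End.mul_apply, LieAlgebra.ad_apply]
  exact ad_pow_succ_apply_mem hW hw k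

end ExpAd

section CoOrbit

variable {g : Type*} [LieRing g] [LieAlgebra ℝ g]

lemma coOrbit_comp_expAd {ξ η : Dual ℝ g} (h : coOrbit ξ η) (x : g) :
    coOrbit ξ (η.comp (expAd (-x))) := by
  obtain ⟨l, rfl⟩ := h
  exact ⟨l ++ [x], by rw [List.foldl_append]; rfl⟩

lemma mem_of_coOrbit {X : Set (Dual ℝ g)} (hX : ∀ ξ ∈ X, ∀ x : g, ξ.comp (expAd (-x)) ∈ X)
    {ξ η : Dual ℝ g} (hξ : ξ ∈ X) (h : coOrbit ξ η) : η ∈ X := by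
  obtain ⟨l, rfl⟩ := h
  induction l generalizing ξ with
  | nil => exact hξ
  | cons x l ih => exact ih (hX ξ hξ x)

end CoOrbit

section SemidirectProduct

variable {g : Type*} [LieRing g] [LieAlgebra ℝ g] {m n s V : Submodule ℝ g}

lemma isotropy_eq_isotropyOn_sup (hmn : m ⊔ n = ⊤) (hms : ∀ x ∈ m, ∀ y ∈ s, ⁅x, y⁆ = 0)
    (hmnV : ∀ x ∈ m, ∀ y ∈ n, ⁅x, y⁆ ∈ V) {η : Dual ℝ g} (hV : V ≤ LinearMap.ker η)
    (hiso : isotropyOn n η = s) : isotropy η = isotropyOn m η ⊔ s := by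
  have hmn_η : ∀ x ∈ m, ∀ z ∈ n, η ⁅x, z⁆ = 0 := fun x hx z hz => hV (hmnV x hx z hz)
  have hsm : ∀ b ∈ s, ∀ y ∈ m, ⁅b, y⁆ = 0 := fun b hb y hy => by
    rw [← lie_skew, hms y hy b hb, neg_zero]
  have hsn : ∀ b ∈ s, ∀ z ∈ n, η ⁅b, z⁆ = 0 := fun b hb => (mem_isotropyOn.mp (hiso ▸ hb)).2
  have hsplit : ∀ y : g, ∃ a ∈ m, ∃ b ∈ n, a + b = y :=
    fun y => Submodule.mem_sup.mp (hmn ▸ Submodule.mem_top)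
  ext x
  constructor
  · intro hx
    obtain ⟨a, ha, b, hb, rfl⟩ := hsplit x
    have hbs : b ∈ s := hiso ▸ ⟨hb, fun z hz => by
      simpa [add_lie, hmn_η a ha z hz] using (mem_isotropy.mp hx) z⟩
    refine Submodule.add_mem_sup ⟨ha, fun y hy => ?_⟩ hbs
    simpa [add_lie, hsm b hbs y hy] using (mem_isotropy.mp hx) y
  · intro hx y
    obtain ⟨a, ha, b, hb, rfl⟩ := Submodule.mem_sup.mp hx
    obtain ⟨y₁, hy₁, y₂, hy₂, rfl⟩ := hsplit y
    simp [add_lie, lie_add, ha.2 y₁ hy₁, hmn_η a ha.1 y₂ hy₂, hsm b hb y₁ hy₁, hsn b hb y₂ hy₂]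

lemma comp_expAd_apply_of_mem (hVn : V ≤ n) (hmnV : ∀ x ∈ m, ∀ y ∈ n, ⁅x, y⁆ ∈ V)
    {η : Dual ℝ g} (hV : V ≤ LinearMap.ker η) {x z : g} (hx : x ∈ m) (hz : z ∈ n) :
    η (expAd (-x) z) = η z := by
  have hxV : ∀ u ∈ n, ⁅-x, u⁆ ∈ V := fun u hu => by
    rw [neg_lie]
    exact neg_mem (hmnV x hx u hu)
  have h := hV (expAd_apply_sub_mem (fun u hu => hxV u (hVn hu)) (hxV z hz))
  rwa [LinearMap.mem_ker, map_sub, sub_eq_zero] at h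

lemma le_ker_and_isotropyOn_eq_of_eqOn (hn : ∀ x ∈ n, ∀ y ∈ n, ⁅x, y⁆ ∈ n) (hVn : V ≤ n)
    {ξ η : Dual ℝ g} (h : ∀ z ∈ n, ξ z = η z) (hV : V ≤ LinearMap.ker η)
    (hiso : isotropyOn n η = s) : V ≤ LinearMap.ker ξ ∧ isotropyOn n ξ = s :=
  ⟨fun v hv => (h v (hVn hv)).trans (hV hv), (isotropyOn_congr hn h).trans hiso⟩

/-- If `m(η|m) ⊋ Z(m)`, the functional equal to the generic `ζ` on `m` and to `η` on `n` would have
the smaller isotropy `Z(m) ⊕ s ⊊ m(η|m) ⊕ s = g(η)`. -/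
lemma isotropyOn_eq_centerIn_of_jumpSetGen_minimal [FiniteDimensional ℝ g]
    (hcompl : IsCompl m n) (hm : ∀ x ∈ m, ∀ y ∈ m, ⁅x, y⁆ ∈ m)
    (hn : ∀ x ∈ n, ∀ y ∈ n, ⁅x, y⁆ ∈ n) (hflat : ∃ ζ : Dual ℝ g, isotropyOn m ζ = centerIn m)
    (hVn : V ≤ n) (hms : ∀ x ∈ m, ∀ y ∈ s, ⁅x, y⁆ = 0) (hmnV : ∀ x ∈ m, ∀ y ∈ n, ⁅x, y⁆ ∈ V)
    {gs : ℕ → Submodule ℝ g} {d : ℕ} (hd : finrank ℝ g = d) (hgsd : gs d = ⊤)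
    (hchain : ∀ j < d, gs j ≤ gs (j + 1)) (hdim : ∀ j ≤ d, finrank ℝ (gs j) = j)
    {η : Dual ℝ g} (hmin : ∀ ζ : Dual ℝ g,
      jumpSetGen gs d (isotropy η) = jumpSetGen gs d (isotropy ζ) ∨
        precRel (jumpSetGen gs d (isotropy η)) (jumpSetGen gs d (isotropy ζ)))
    (hV : V ≤ LinearMap.ker η) (hiso : isotropyOn n η = s) :
    isotropyOn m η = centerIn m := by
  obtain ⟨ζ, hζ⟩ := hflat
  let ζ' : Dual ℝ g := LinearMap.ofIsCompl hcompl (ζ ∘ₗ m.subtype) (η ∘ₗ n.subtype)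
  have hζ'm : ∀ y ∈ m, ζ' y = ζ y := fun y hy => LinearMap.ofIsCompl_apply_left hcompl ⟨y, hy⟩
  have hζ'n : ∀ z ∈ n, ζ' z = η z := fun z hz => LinearMap.ofIsCompl_apply_right hcompl ⟨z, hz⟩
  obtain ⟨hV', hiso'⟩ := le_ker_and_isotropyOn_eq_of_eqOn hn hVn hζ'n hV hiso
  have hζ'iso : isotropy ζ' = centerIn m ⊔ s := by
    rw [isotropy_eq_isotropyOn_sup hcompl.sup_eq_top hms hmnV hV' hiso', isotropyOn_congr hm hζ'm,
      hζ]
  have hηiso := isotropy_eq_isotropyOn_sup hcompl.sup_eq_top hms hmnV hV hiso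
  refine ((centerIn_le_isotropyOn m η).eq_of_not_lt fun hlt => ?_).symm
  refine not_isotropy_lt_of_jumpSetGen_minimal hd hgsd hchain hdim (hmin ζ') ?_
  rw [hζ'iso, hηiso]
  refine sup_lt_sup_of_lt_of_inf_le_inf hlt (le_trans ?_ bot_le)
  rw [← hcompl.inf_eq_bot, ← hiso]
  exact inf_le_inf (isotropyOn_le m η) (isotropyOn_le n η)

end SemidirectProduct

section JordanHolder

variable {g : Type*} [LieRing g] [LieAlgebra ℝ g]

lemma lie_mem_of_jordanHolder {gs : ℕ → Submodule ℝ g} {d : ℕ} (hgs0 : gs 0 = ⊥)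
    (hchain : ∀ j < d, gs j ≤ gs (j + 1))
    (hbr : ∀ j, 1 ≤ j → j ≤ d → ∀ x : g, ∀ y ∈ gs j, ⁅x, y⁆ ∈ gs (j - 1)) {j : ℕ} (hj : j ≤ d)
    (x : g) {y : g} (hy : y ∈ gs j) : ⁅x, y⁆ ∈ gs j := by
  rcases Nat.eq_zero_or_pos j with rfl | hj0
  · rw [hgs0, Submodule.mem_bot] at hy ⊢
    rw [hy, lie_zero]
  · have := hchain (j - 1) (by omega)
    rw [Nat.sub_add_cancel hj0] at this
    exact this (hbr j hj0 hj x y hy)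

lemma lie_mem_centerIn_sup_inf {m G G' : Submodule ℝ g} (hm : ∀ x ∈ m, ∀ y ∈ m, ⁅x, y⁆ ∈ m)
    (h : ∀ x ∈ m, ∀ y ∈ G', ⁅x, y⁆ ∈ G) {x y : g} (hx : x ∈ m) (hy : y ∈ centerIn m ⊔ (m ⊓ G')) :
    ⁅x, y⁆ ∈ centerIn m ⊔ (m ⊓ G) := by
  obtain ⟨z, hz, w, hw, rfl⟩ := Submodule.mem_sup.mp hy
  rw [lie_add, ← lie_skew x z, hz.2 x hx, neg_zero, zero_add]
  exact Submodule.mem_sup_right ⟨hm x hx w hw.1, h x hx w hw.2⟩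

end JordanHolder

section Sweep

variable {g : Type*} [LieRing g] [LieAlgebra ℝ g] [FiniteDimensional ℝ g]

/-- One step of the sweep: choose `x ∈ m` with `η ⁅x, ·⁆ = 0` on `A` and `= η` on `U ⊓ B`; then
`exp(-ad x)` changes `η` on `U ⊓ B` only through its first-order term `-η ⁅x, ·⁆`. -/
lemma exists_comp_expAd_eq_zero_of_lie_mem {m A B U : Submodule ℝ g} {η : Dual ℝ g}
    (hAm : A ≤ m) (hU : U ≤ m) (hA : ∀ x ∈ m, ∀ a ∈ A, ⁅x, a⁆ ∈ A)
    (hB : ∀ x ∈ m, ∀ b ∈ B, ⁅x, b⁆ ∈ A) (hiso : isotropyOn m η ≤ A)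
    (hvan : ∀ u ∈ U ⊓ A, η u = 0) : ∃ x ∈ m, ∀ u ∈ U ⊓ B, η (expAd (-x) u) = 0 := by
  obtain ⟨φ, hφA, hφUB⟩ := Subspace.exists_dual_eq_zero_and_eqOn A (U ⊓ B) η
    fun w hw => hvan w ⟨hw.2.1, hw.1⟩
  obtain ⟨x, hxm, hx⟩ := exists_lie_eq_of_isotropyOn m η φ fun y hy => hφA y (hiso hy)
  refine ⟨x, hxm, fun u hu => ?_⟩
  have hxA : ∀ a ∈ A, ⁅-x, a⁆ ∈ A ⊓ LinearMap.ker η := fun a ha => by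
    rw [neg_lie]
    exact ⟨neg_mem (hA x hxm a ha), by rw [SetLike.mem_coe, LinearMap.mem_ker, map_neg,
      hx a (hAm ha), hφA a ha, neg_zero]⟩
  have hxu : ⁅-x, u⁆ ∈ A := by
    rw [neg_lie]
    exact neg_mem (hB x hxm u hu.2)
  have h : η (expAd (-x) u - u - ⁅-x, u⁆) = 0 :=
    (expAd_apply_sub_sub_lie_mem (fun a ha => hxA a ha.1) (hxA _ hxu)).2
  rw [map_sub, map_sub, neg_lie, map_neg, hx u (hU hu.1), hφUB u hu] at h
  linarith

lemma exists_eq_zero_on_inf_of_flag {m C U : Submodule ℝ g} (P : Dual ℝ g → Prop)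
    (F : ℕ → Submodule ℝ g) (r : ℕ) (hP : ∀ η, P η → ∀ x ∈ m, P (η.comp (expAd (-x))))
    (hiso : ∀ η, P η → isotropyOn m η ≤ C) (hCF : ∀ j, C ≤ F j) (hFm : ∀ j, F j ≤ m)
    (hU : U ≤ m) (hinv : ∀ j < r, ∀ x ∈ m, ∀ a ∈ F j, ⁅x, a⁆ ∈ F j)
    (hstep : ∀ j < r, ∀ x ∈ m, ∀ b ∈ F (j + 1), ⁅x, b⁆ ∈ F j) {η : Dual ℝ g} (hη : P η)
    (h0 : ∀ u ∈ U ⊓ F 0, η u = 0) : ∃ η', P η' ∧ ∀ u ∈ U ⊓ F r, η' u = 0 := by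
  induction r with
  | zero => exact ⟨η, hη, h0⟩
  | succ r ih =>
    obtain ⟨η₁, hP₁, hvan₁⟩ := ih (fun j hj => hinv j (by omega)) (fun j hj => hstep j (by omega))
    obtain ⟨x, hx, hvan⟩ := exists_comp_expAd_eq_zero_of_lie_mem (hFm r) hU (hinv r r.lt_succ_self)
      (hstep r r.lt_succ_self) ((hiso η₁ hP₁).trans (hCF r)) hvan₁
    exact ⟨_, hP η₁ hP₁ x hx, hvan⟩

lemma exists_eq_zero_on_of_jordanHolder {m U : Submodule ℝ g}
    (hm : ∀ x ∈ m, ∀ y ∈ m, ⁅x, y⁆ ∈ m) (P : Dual ℝ g → Prop)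
    (hP : ∀ η, P η → ∀ x ∈ m, P (η.comp (expAd (-x))))
    (hiso : ∀ η, P η → isotropyOn m η ≤ centerIn m) {gs : ℕ → Submodule ℝ g} {d : ℕ}
    (hgs0 : gs 0 = ⊥) (hgsd : gs d = ⊤) (hchain : ∀ j < d, gs j ≤ gs (j + 1))
    (hbr : ∀ j, 1 ≤ j → j ≤ d → ∀ x : g, ∀ y ∈ gs j, ⁅x, y⁆ ∈ gs (j - 1))
    (hU : U ≤ m) (hUZ : U ⊓ centerIn m = ⊥) {η : Dual ℝ g} (hη : P η) :
    ∃ η', P η' ∧ ∀ u ∈ U, η' u = 0 := by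
  let F : ℕ → Submodule ℝ g := fun j => centerIn m ⊔ (m ⊓ gs j)
  have hF0 : F 0 = centerIn m := by simp [F, hgs0]
  have hFd : F d = m := by simp [F, hgsd, centerIn_le]
  obtain ⟨η', hη', hvan⟩ := exists_eq_zero_on_inf_of_flag P F d hP hiso (fun _ => le_sup_left)
    (fun _ => sup_le (centerIn_le m) inf_le_left) hU
    (fun j hj x hx a ha => lie_mem_centerIn_sup_inf hm
      (fun x _ y hy => lie_mem_of_jordanHolder hgs0 hchain hbr hj.le x hy) hx ha)
    (fun j hj x hx b hb => lie_mem_centerIn_sup_inf hm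
      (fun x _ y hy => by simpa using hbr (j + 1) (by omega) hj x y hy) hx hb)
    hη (by simp [hF0, hUZ])
  exact ⟨η', hη', fun u hu => hvan u ⟨hu, hFd ▸ hU hu⟩⟩

end Sweep

/-- `e(g)`-minimality of a jump set is expressed by `≺`-comparison with the jump sets of all
functionals, and subsets of `n*` are represented by sets of functionals on `g`. -/
theorem stmt14_general {g : Type*} [LieRing g] [LieAlgebra ℝ g] [Module.Finite ℝ g]
    -- the semidirect product decomposition g = m ⋉ n
    (n : LieIdeal ℝ g) (m : LieSubalgebra ℝ g)
    (hcompl : IsCompl m.toSubmodule n.toSubmodule)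
    -- m has 1-dimensional center and generic flat coadjoint orbits
    (hzm : Module.finrank ℝ (centerIn m.toSubmodule) = 1)
    (hflat : ∃ ζ : Module.Dual ℝ g, isotropyOn m.toSubmodule ζ = centerIn m.toSubmodule)
    -- the Jordan–Hölder series of g passing through n at index k
    (d : ℕ) (hd : Module.finrank ℝ g = d)
    (gs : ℕ → Submodule ℝ g)
    (hgs0 : gs 0 = ⊥) (hgsd : gs d = ⊤)
    (hchain : ∀ j < d, gs j ≤ gs (j + 1))
    (hdim : ∀ j ≤ d, Module.finrank ℝ (gs j) = j)
    (hbr : ∀ j, 1 ≤ j → j ≤ d → ∀ x : g, ∀ y ∈ gs j, ⁅x, y⁆ ∈ gs (j - 1))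
    -- the set X ⊆ n*
    (X : Set (Module.Dual ℝ g))
    -- (b) the subalgebra s and the subspace V
    (s V : Submodule ℝ g)
    (hV_sub : V ≤ n.toSubmodule)
    (hms : ∀ x ∈ m, ∀ y ∈ s, ⁅x, y⁆ = 0)
    (hmnV : ∀ x ∈ m, ∀ y ∈ n, ⁅x, y⁆ ∈ V)
    (hXorb : ∀ ξ ∈ X, ∃ η : Module.Dual ℝ g, coOrbitOn n.toSubmodule ξ η ∧
      V ≤ LinearMap.ker η ∧ isotropyOn n.toSubmodule η = s)
    -- the set X̃ ⊆ g*: Ad*-invariant, J(ξ̃) = e(g) and ξ̃|_n ∈ X for ξ̃ ∈ X̃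
    (Xt : Set (Module.Dual ℝ g))
    (hXtinv : ∀ ξ ∈ Xt, ∀ x : g, ξ.comp (expAd (-x)) ∈ Xt)
    (hXtjump : ∀ ξ ∈ Xt, ∀ η : Module.Dual ℝ g,
      jumpSetGen gs d (isotropy ξ) = jumpSetGen gs d (isotropy η) ∨
        precRel (jumpSetGen gs d (isotropy ξ)) (jumpSetGen gs d (isotropy η)))
    (hXtres : ∀ ξ ∈ Xt, ξ ∈ X) :
    -- conclusion
    ∀ ξt ∈ Xt, ∀ V0 : Submodule ℝ g, V0 ≤ m.toSubmodule →
      Module.finrank ℝ V0 + 1 = Module.finrank ℝ m.toSubmodule →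
      centerIn m.toSubmodule ⊔ V0 = m.toSubmodule →
      ∃ ξ0 : Module.Dual ℝ g, coOrbit ξt ξ0 ∧
        V0 ⊔ V ≤ LinearMap.ker ξ0 ∧
        isotropyOn m.toSubmodule ξ0 = centerIn m.toSubmodule ∧
        isotropyOn n.toSubmodule ξ0 = s ∧
        isotropy ξ0 = centerIn m.toSubmodule ⊔ s := by
  intro ξt hξt V0 hV0m hV0rank hZV0
  have hm : ∀ x ∈ m.toSubmodule, ∀ y ∈ m.toSubmodule, ⁅x, y⁆ ∈ m.toSubmodule :=
    fun _ hx _ hy => m.lie_mem hx hy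
  have hn : ∀ x ∈ n.toSubmodule, ∀ y ∈ n.toSubmodule, ⁅x, y⁆ ∈ n.toSubmodule :=
    fun _ _ _ hy => n.lie_mem hy
  let P : Module.Dual ℝ g → Prop := fun η =>
    coOrbit ξt η ∧ V ≤ LinearMap.ker η ∧ isotropyOn n.toSubmodule η = s
  have hPflat : ∀ η, P η → isotropyOn m.toSubmodule η = centerIn m.toSubmodule :=
    fun η ⟨hco, hV, hiso⟩ => isotropyOn_eq_centerIn_of_jumpSetGen_minimal hcompl hm hn hflat
      hV_sub hms hmnV hd hgsd hchain hdim (hXtjump η (mem_of_coOrbit hXtinv hξt hco)) hV hiso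
  have hPexp : ∀ η, P η → ∀ x ∈ m.toSubmodule, P (η.comp (expAd (-x))) :=
    fun η ⟨hco, hV, hiso⟩ x hx => ⟨coOrbit_comp_expAd hco x, le_ker_and_isotropyOn_eq_of_eqOn hn
      hV_sub (fun z hz => comp_expAd_apply_of_mem hV_sub hmnV hV hx hz) hV hiso⟩
  obtain ⟨ξ1, hξ1⟩ : ∃ ξ1, P ξ1 := by
    obtain ⟨η, ⟨l, -, hl⟩, hV, hiso⟩ := hXorb ξt (hXtres ξt hξt)
    exact ⟨_, ⟨l, rfl⟩, le_ker_and_isotropyOn_eq_of_eqOn hn hV_sub (fun z hz => (hl z hz).symm)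
      hV hiso⟩
  have hV0Z : V0 ⊓ centerIn m.toSubmodule = ⊥ := by
    have h := Submodule.finrank_sup_add_finrank_inf_eq (centerIn m.toSubmodule) V0
    rw [hZV0, hzm] at h
    rw [inf_comm, ← Submodule.finrank_eq_zero]
    omega
  obtain ⟨ξ0, ⟨hco, hV, hiso⟩, hvan⟩ := exists_eq_zero_on_of_jordanHolder hm P hPexp
    (fun η hη => (hPflat η hη).le) hgs0 hgsd hchain hbr hV0m hV0Z hξ1
  refine ⟨ξ0, hco, sup_le hvan hV, hPflat ξ0 ⟨hco, hV, hiso⟩, hiso, ?_⟩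
  rw [isotropy_eq_isotropyOn_sup hcompl.sup_eq_top hms hmnV hV hiso, hPflat ξ0 ⟨hco, hV, hiso⟩]

/-- Lemma rec: subsets of `n*` (resp. of `g*`) are represented by
sets of functionals on `g` whose membership only depends on the restriction to `n`;
`e(g)`-minimality (resp. `e(n)`-minimality) of a jump set is expressed by
`≺`-comparison with the jump sets of all functionals. -/
theorem stmt14 {g : Type*} [LieRing g] [LieAlgebra ℝ g] [Module.Finite ℝ g]
    [LieRing.IsNilpotent g]
    -- the semidirect product decomposition g = m ⋉ n
    (n : LieIdeal ℝ g) (m : LieSubalgebra ℝ g)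
    (hcompl : IsCompl m.toSubmodule n.toSubmodule)
    -- m has 1-dimensional center and generic flat coadjoint orbits
    (hzm : Module.finrank ℝ (centerIn m.toSubmodule) = 1)
    (hflat : ∃ ζ : Module.Dual ℝ g, isotropyOn m.toSubmodule ζ = centerIn m.toSubmodule)
    -- the Jordan–Hölder series of g passing through n at index k
    (d k : ℕ) (hd : Module.finrank ℝ g = d) (hk : Module.finrank ℝ n.toSubmodule = k)
    (gs : ℕ → Submodule ℝ g)
    (hgs0 : gs 0 = ⊥) (hgsd : gs d = ⊤)
    (hchain : ∀ j < d, gs j ≤ gs (j + 1))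
    (hdim : ∀ j ≤ d, Module.finrank ℝ (gs j) = j)
    (hbr : ∀ j, 1 ≤ j → j ≤ d → ∀ x : g, ∀ y ∈ gs j, ⁅x, y⁆ ∈ gs (j - 1))
    (hgk : gs k = n.toSubmodule)
    -- the set X ⊆ n*
    (X : Set (Module.Dual ℝ g))
    (hXres : ∀ ξ η : Module.Dual ℝ g, (∀ z ∈ n, ξ z = η z) → (ξ ∈ X ↔ η ∈ X))
    -- (a) X is Ad*_N-invariant and J(ξ) = e(n) for every ξ ∈ X
    (hXinv : ∀ ξ ∈ X, ∀ y ∈ n, ξ.comp (expAd (-y)) ∈ X)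
    (hXjump : ∀ ξ ∈ X, ∀ η : Module.Dual ℝ g,
      jumpSetGen gs k (isotropyOn n.toSubmodule ξ) =
          jumpSetGen gs k (isotropyOn n.toSubmodule η) ∨
        precRel (jumpSetGen gs k (isotropyOn n.toSubmodule ξ))
          (jumpSetGen gs k (isotropyOn n.toSubmodule η)))
    -- (b) the subalgebra s and the subspace V
    (s V : Submodule ℝ g)
    (hs_sub : s ≤ n.toSubmodule) (hV_sub : V ≤ n.toSubmodule)
    (hs_lie : ∀ x ∈ s, ∀ y ∈ s, ⁅x, y⁆ ∈ s)
    (hsV_sup : s ⊔ V = n.toSubmodule) (hsV_disj : Disjoint s V)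
    (hms : ∀ x ∈ m, ∀ y ∈ s, ⁅x, y⁆ = 0)
    (hmnV : ∀ x ∈ m, ∀ y ∈ n, ⁅x, y⁆ ∈ V)
    (hXorb : ∀ ξ ∈ X, ∃ η : Module.Dual ℝ g, coOrbitOn n.toSubmodule ξ η ∧
      V ≤ LinearMap.ker η ∧ isotropyOn n.toSubmodule η = s)
    -- the set X̃ ⊆ g*: Ad*-invariant, J(ξ̃) = e(g) and ξ̃|_n ∈ X for ξ̃ ∈ X̃
    (Xt : Set (Module.Dual ℝ g))
    (hXtinv : ∀ ξ ∈ Xt, ∀ x : g, ξ.comp (expAd (-x)) ∈ Xt)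
    (hXtjump : ∀ ξ ∈ Xt, ∀ η : Module.Dual ℝ g,
      jumpSetGen gs d (isotropy ξ) = jumpSetGen gs d (isotropy η) ∨
        precRel (jumpSetGen gs d (isotropy ξ)) (jumpSetGen gs d (isotropy η)))
    (hXtres : ∀ ξ ∈ Xt, ξ ∈ X) :
    -- conclusion
    ∀ ξt ∈ Xt, ∀ V0 : Submodule ℝ g, V0 ≤ m.toSubmodule →
      Module.finrank ℝ V0 + 1 = Module.finrank ℝ m.toSubmodule →
      centerIn m.toSubmodule ⊔ V0 = m.toSubmodule →
      ∃ ξ0 : Module.Dual ℝ g, coOrbit ξt ξ0 ∧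
        V0 ⊔ V ≤ LinearMap.ker ξ0 ∧
        isotropyOn m.toSubmodule ξ0 = centerIn m.toSubmodule ∧
        isotropyOn n.toSubmodule ξ0 = s ∧
        isotropy ξ0 = centerIn m.toSubmodule ⊔ s :=
  stmt14_general n m hcompl hzm hflat d hd gs hgs0 hgsd hchain hdim hbr X s V hV_sub hms hmnV hXorb
    Xt hXtinv hXtjump hXtres
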